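/- arXiv:2409.14189 — 2 statements merged into one kernel-verified Lean document; each statement's English description precedes it below -/
import Mathlib

section
/- Let σ be a nondecreasing sigmoidal function satisfying (Σ1)–(Σ5), with α > m + 1 (α from (Σ3), m from (Σ4)), let a < b be integers and δ > 0 with a + δ < b − δ. Let C₀ > 0 and K₀ > 0 be such that φ_σ(x) ≤ C₀|x|^{−α−1} for |x| ≥ K₀. Then for every j = 1, …, m, every x ∈ I_δ := [a+δ, b−δ], and every n ∈ ℕ⁺ with nδ ≥ K₀ + 1, one has |m^n_j(φ_σ, nx) − A_{0,j}| ≤ 2 R̄_{α,0,j} n^{−(α−j+1)/2}, where R̄_{α,0,j} := C₀ (2δ)^{−(α−j+1)/2} ζ((α−j+1)/2) and ζ is the Riemann zeta function. -/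
open Filter Topology MeasureTheory

/-- The density (kernel) function generated by a sigmoidal function. -/
noncomputable def phiFn (σ : ℝ → ℝ) (x : ℝ) : ℝ := (σ (x + 1) - σ (x - 1)) / 2

/-- σ is a (measurable) sigmoidal function. -/
def Sigmoidal (σ : ℝ → ℝ) : Prop :=
  Measurable σ ∧ Tendsto σ atBot (𝓝 0) ∧ Tendsto σ atTop (𝓝 1)

/-- (Σ1): σ(x) - 1/2 is an odd function. -/
def Sigma1 (σ : ℝ → ℝ) : Prop := ∀ x : ℝ, σ (-x) - 1/2 = -(σ x - 1/2)

/-- (Σ2): σ ∈ C²(ℝ) and σ is concave on [0, +∞). -/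
def Sigma2 (σ : ℝ → ℝ) : Prop := ContDiff ℝ 2 σ ∧ ConcaveOn ℝ (Set.Ici 0) σ

/-- (Σ3): σ(x) = O(|x|^{-α-1}) as x → -∞, with α > 0. -/
def Sigma3 (σ : ℝ → ℝ) (α : ℝ) : Prop :=
  0 < α ∧ σ =O[atBot] fun x : ℝ => |x| ^ (-α - 1)

/-- (Σ4): σ ∈ C^m(ℝ), m ≥ 2, and for each s = 1,…,m there are constants
`K s, C s > 0` with |σ^{(s)}(x)| ≤ C s * |x|^{-β-1} for |x| ≥ K s, where β > m + 1. -/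
def Sigma4 (σ : ℝ → ℝ) (m : ℕ) (β : ℝ) (K C : ℕ → ℝ) : Prop :=
  2 ≤ m ∧ (m : ℝ) + 1 < β ∧ ContDiff ℝ m σ ∧
    ∀ s : ℕ, 1 ≤ s → s ≤ m → 0 < K s ∧ 0 < C s ∧
      ∀ x : ℝ, K s ≤ |x| → |iteratedDeriv s σ x| ≤ C s * |x| ^ (-β - 1)

/-- Algebraic moment of order ν of Φ. -/
noncomputable def algMoment (Φ : ℝ → ℝ) (ν : ℕ) (x : ℝ) : ℝ :=
  ∑' k : ℤ, Φ (x - (k : ℝ)) * ((k : ℝ) - x) ^ ν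

/-- (Σ5): the algebraic moments of order j = 1,…,m of φ_σ are constants A j. -/
def Sigma5 (σ : ℝ → ℝ) (m : ℕ) (A : ℕ → ℝ) : Prop :=
  ∀ j : ℕ, 1 ≤ j → j ≤ m → ∀ x : ℝ, algMoment (phiFn σ) j x = A j

/-- Truncated algebraic moment of order ν of Φ (associated with integers a < b). -/
noncomputable def truncMoment (Φ : ℝ → ℝ) (ν : ℕ) (a b : ℤ) (n : ℕ) (u : ℝ) : ℝ :=
  ∑ k ∈ Finset.Icc ((n : ℤ) * a) ((n : ℤ) * b), Φ (u - (k : ℝ)) * ((k : ℝ) - u) ^ ν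

/-- The ν-th discrete absolute moment function of Φ (before taking sup over u). -/
noncomputable def discMoment (Φ : ℝ → ℝ) (ν : ℝ) (u : ℝ) : ℝ :=
  ∑' k : ℤ, |Φ (u - (k : ℝ))| * |u - (k : ℝ)| ^ ν

/-- The Riemann zeta function (as a real series), ζ(p) = ∑_{i≥1} i^{-p}. -/
noncomputable def zetaR (p : ℝ) : ℝ := ∑' i : ℕ, ((i : ℝ) + 1) ^ (-p)

/-- The NN operator F_n activated by σ. -/
noncomputable def Fop (σ : ℝ → ℝ) (f : ℝ → ℝ) (a b : ℝ) (n : ℕ) (x : ℝ) : ℝ :=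
  (∑ k ∈ Finset.Icc ⌈(n : ℝ) * a⌉ ⌊(n : ℝ) * b⌋, f ((k : ℝ) / n) * phiFn σ ((n : ℝ) * x - k)) /
    (∑ k ∈ Finset.Icc ⌈(n : ℝ) * a⌉ ⌊(n : ℝ) * b⌋, phiFn σ ((n : ℝ) * x - k))

/-- The modified NN operator F̃_n (integer endpoints a < b). -/
noncomputable def Ftil (σ : ℝ → ℝ) (f : ℝ → ℝ) (a b : ℤ) (n : ℕ) (x : ℝ) : ℝ :=
  ∑ k ∈ Finset.Icc ((n : ℤ) * a) ((n : ℤ) * b), f ((k : ℝ) / n) * phiFn σ ((n : ℝ) * x - (k : ℝ))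

/-- Sup-norm of g on [a,b]. -/
noncomputable def supNormOn (g : ℝ → ℝ) (a b : ℝ) : ℝ := ⨆ x : Set.Icc a b, |g x|

/-- Modulus of continuity of g on [a,b]. -/
noncomputable def modulus (g : ℝ → ℝ) (a b h : ℝ) : ℝ :=
  sSup {y : ℝ | ∃ u ∈ Set.Icc a b, ∃ v ∈ Set.Icc a b, |u - v| ≤ h ∧ y = |g u - g v|}

/-- Discrete absolute moment (natural order ν) of Φ: sup over u of the moment series. -/
noncomputable def dmomentN (Φ : ℝ → ℝ) (ν : ℕ) : ℝ :=
  ⨆ u : ℝ, ∑' k : ℤ, |Φ (u - (k : ℝ))| * |u - (k : ℝ)| ^ ν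

/-! By (Σ5), `A j` is the full series `∑ₖ φ_σ(nx - k) (k - nx)^j`, so the error is the sum of
its two tails `k < na` and `k > nb`. The `i`-th term of either tail has `|nx - k| ≥ nδ + i + 1`,
so the decay of `φ_σ ≥ 0` bounds it by `C₀ |nx - k|^(-(α-j+1)) ≤ C₀ (2nδ(i+1))^(-(α-j+1)/2)`,
using `(nδ + s)² ≥ 2nδs`; summing over `i` gives `ζ((α-j+1)/2)` for each tail. -/

theorem range_sub_one_sub_natCast (M : ℤ) : Set.range (fun i : ℕ => M - 1 - i) = Set.Iio M := by
  ext k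
  refine ⟨?_, fun (hk : k < M) => ⟨(M - 1 - k).toNat, by simp only; omega⟩⟩
  rintro ⟨i, rfl⟩
  simp only [Set.mem_Iio]
  omega

theorem range_add_one_add_natCast (N : ℤ) : Set.range (fun i : ℕ => N + 1 + i) = Set.Ioi N := by
  ext k
  refine ⟨?_, fun (hk : N < k) => ⟨(k - N - 1).toNat, by simp only; omega⟩⟩
  rintro ⟨i, rfl⟩
  simp only [Set.mem_Ioi]
  omega

theorem HasSum.int_of_tails {α : Type*} [AddCommMonoid α] [TopologicalSpace α] [ContinuousAdd α]
    {f : ℤ → α} {M N : ℤ} {a b : α} (hMN : M ≤ N)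
    (hl : HasSum (fun i : ℕ => f (M - 1 - i)) a) (hr : HasSum (fun i : ℕ => f (N + 1 + i)) b) :
    HasSum f (a + ∑ k ∈ Finset.Icc M N, f k + b) := by
  have hL : HasSum (f ∘ Subtype.val : Set.Iio M → α) a := by
    rw [← range_sub_one_sub_natCast]
    exact (Function.Injective.hasSum_range_iff fun i i' h => by simpa using h).mpr hl
  have hS : HasSum (f ∘ Subtype.val : Set.Icc M N → α) (∑ k ∈ Finset.Icc M N, f k) := by
    rw [← Finset.coe_Icc]
    exact Finset.hasSum _ f
  have hR : HasSum (f ∘ Subtype.val : Set.Ioi N → α) b := by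
    rw [← range_add_one_add_natCast]
    exact (Function.Injective.hasSum_range_iff fun i i' h => by simpa using h).mpr hr
  have hLS :=
    hL.add_disjoint ((Set.Iio_disjoint_Ici (le_refl M)).mono_right Set.Icc_subset_Ici_self) hS
  rw [Set.Iio_union_Icc_eq_Iic hMN] at hLS
  exact hLS.add_isCompl (by rw [← Set.compl_Iic]; exact isCompl_compl) hR

theorem abs_tsum_sub_sum_Icc_le {f : ℤ → ℝ} {b : ℕ → ℝ} (hb : Summable b) {M N : ℤ}
    (hMN : M ≤ N) (hl : ∀ i : ℕ, |f (M - 1 - i)| ≤ b i) (hr : ∀ i : ℕ, |f (N + 1 + i)| ≤ b i) :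
    |∑' k, f k - ∑ k ∈ Finset.Icc M N, f k| ≤ 2 * ∑' i, b i := by
  have hL : Summable fun i : ℕ => f (M - 1 - i) := hb.of_norm_bounded hl
  have hR : Summable fun i : ℕ => f (N + 1 + i) := hb.of_norm_bounded hr
  rw [(hL.hasSum.int_of_tails hMN hR.hasSum).tsum_eq, add_sub_right_comm, add_sub_cancel_right,
    two_mul]
  have tail (g : ℕ → ℝ) (hg : ∀ i, |g i| ≤ b i) : |∑' i, g i| ≤ ∑' i, b i :=
    tsum_of_norm_bounded (f := g) hb.hasSum hg
  exact (abs_add_le _ _).trans (add_le_add (tail _ hl) (tail _ hr))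

theorem summable_nat_add_one_rpow_neg {p : ℝ} (hp : 1 < p) :
    Summable fun i : ℕ => ((i : ℝ) + 1) ^ (-p) := by
  simpa using (summable_nat_add_iff 1).mpr (Real.summable_nat_rpow.mpr (neg_lt_neg hp))

theorem rpow_neg_two_mul_le_of_add_le {D s t p : ℝ} (hD : 0 < D) (hs : 0 < s) (hp : 0 ≤ p)
    (ht : D + s ≤ t) : t ^ (-(2 * p)) ≤ (2 * D) ^ (-p) * s ^ (-p) := by
  have hsq : 2 * D * s ≤ t ^ 2 := by nlinarith
  rw [neg_mul_eq_mul_neg, ← Nat.cast_ofNat, Real.rpow_natCast_mul (by linarith) 2 (-p),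
    ← Real.mul_rpow (by positivity) hs.le]
  exact Real.rpow_le_rpow_of_nonpos (by positivity) hsq (neg_nonpos.mpr hp)

theorem phiFn_nonneg {σ : ℝ → ℝ} (hσ : Monotone σ) (x : ℝ) : 0 ≤ phiFn σ x :=
  div_nonneg (sub_nonneg.mpr (hσ (by linarith))) zero_le_two

section MomentTerm

variable {Φ : ℝ → ℝ} {C₀ K₀ α : ℝ} {j : ℕ}

theorem abs_moment_term_le (hΦ : ∀ x, 0 ≤ Φ x) (hK₀ : 0 < K₀)
    (hdecay : ∀ x, K₀ ≤ |x| → Φ x ≤ C₀ * |x| ^ (-α - 1)) {u v : ℝ} (huv : K₀ ≤ |u - v|) :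
    |Φ (u - v) * (v - u) ^ j| ≤ C₀ * |u - v| ^ (-(α + 1 - j)) := by
  have hpos : 0 < |u - v| := hK₀.trans_le huv
  rw [abs_mul, abs_of_nonneg (hΦ _), abs_pow, abs_sub_comm v u]
  calc Φ (u - v) * |u - v| ^ j ≤ C₀ * |u - v| ^ (-α - 1) * |u - v| ^ j := by
        gcongr; exact hdecay _ huv
    _ = C₀ * |u - v| ^ (-(α + 1 - j)) := by
        rw [mul_assoc, ← Real.rpow_natCast, ← Real.rpow_add hpos]
        ring_nf

theorem abs_moment_term_le_of_add_le (hΦ : ∀ x, 0 ≤ Φ x) (hK₀ : 0 < K₀)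
    (hdecay : ∀ x, K₀ ≤ |x| → Φ x ≤ C₀ * |x| ^ (-α - 1)) (hC₀ : 0 ≤ C₀) (hj : j ≤ α + 1)
    {D s u v : ℝ} (hKD : K₀ ≤ D) (hs : 0 < s) (huv : D + s ≤ |u - v|) :
    |Φ (u - v) * (v - u) ^ j| ≤ C₀ * (2 * D) ^ (-((α + 1 - j) / 2)) * s ^ (-((α + 1 - j) / 2)) := by
  refine (abs_moment_term_le hΦ hK₀ hdecay (by linarith)).trans ?_
  have hrpow := rpow_neg_two_mul_le_of_add_le (hK₀.trans_le hKD) hs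
    (by linarith : 0 ≤ (α + 1 - j) / 2) huv
  rw [mul_div_cancel₀ _ two_ne_zero] at hrpow
  rw [mul_assoc]
  gcongr

end MomentTerm

theorem trunc_moment_estimate_phi_general (σ : ℝ → ℝ) (α : ℝ) (m : ℕ) (A : ℕ → ℝ)
    (hmono : Monotone σ) (h5 : Sigma5 σ m A) (hα : (m : ℝ) + 1 < α)
    (a b : ℤ) (hab : a < b) (δ : ℝ) (hδ : 0 < δ)
    (C₀ K₀ : ℝ) (hC₀ : 0 < C₀) (hK₀ : 0 < K₀)
    (hdecay : ∀ x : ℝ, K₀ ≤ |x| → phiFn σ x ≤ C₀ * |x| ^ (-α - 1))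
    (j : ℕ) (hj1 : 1 ≤ j) (hjm : j ≤ m)
    (x : ℝ) (hx : x ∈ Set.Icc ((a : ℝ) + δ) ((b : ℝ) - δ))
    (n : ℕ) (hnδ : K₀ + 1 ≤ (n : ℝ) * δ) :
    |truncMoment (phiFn σ) j a b n ((n : ℝ) * x) - A j|
      ≤ 2 * (C₀ * (2 * δ) ^ (-(α - (j : ℝ) + 1) / 2) * zetaR ((α - (j : ℝ) + 1) / 2)) *
          (n : ℝ) ^ (-(α - (j : ℝ) + 1) / 2) := by
  obtain ⟨hxa, hxb⟩ := hx
  set p := (α - j + 1) / 2 with hp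
  have hjα : (j : ℝ) + 1 < α := by linarith [(Nat.cast_le.mpr hjm : (j : ℝ) ≤ m)]
  have hp1 : 1 < p := by rw [hp]; linarith
  have hlo : n * (a + δ) ≤ n * x := mul_le_mul_of_nonneg_left hxa n.cast_nonneg
  have hhi : n * x ≤ n * (b - δ) := mul_le_mul_of_nonneg_left hxb n.cast_nonneg
  set g : ℤ → ℝ := fun k => phiFn σ (n * x - k) * (k - n * x) ^ j
  have term (k : ℤ) (i : ℕ) (hk : n * δ + (i + 1) ≤ |n * x - k|) :
      |g k| ≤ C₀ * (2 * (n * δ)) ^ (-p) * ((i : ℝ) + 1) ^ (-p) := by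
    convert abs_moment_term_le_of_add_le (j := j) (phiFn_nonneg hmono) hK₀ hdecay hC₀.le
      (by linarith) (by linarith) (by positivity) hk using 4 <;> ring
  have hleft (i : ℕ) := term (n * a - 1 - i) i (by
    push_cast
    rw [abs_of_nonneg] <;> linarith)
  have hright (i : ℕ) := term (n * b + 1 + i) i (by
    push_cast
    rw [abs_of_nonpos] <;> linarith)
  have hmain := abs_tsum_sub_sum_Icc_le ((summable_nat_add_one_rpow_neg hp1).mul_left _)
    (mul_le_mul_of_nonneg_left hab.le n.cast_nonneg) hleft hright
  rw [tsum_mul_left, show 2 * ((n : ℝ) * δ) = 2 * δ * n by ring,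
    Real.mul_rpow (by positivity) n.cast_nonneg] at hmain
  rw [← h5 j hj1 hjm (n * x), abs_sub_comm, show -(α - j + 1) / 2 = -p by ring]
  exact hmain.trans_eq (by unfold zetaR; ring)

theorem trunc_moment_estimate_phi (σ : ℝ → ℝ) (α β : ℝ) (m : ℕ) (K C : ℕ → ℝ) (A : ℕ → ℝ)
    (hσ : Sigmoidal σ) (hmono : Monotone σ) (h1 : Sigma1 σ) (h2 : Sigma2 σ) (h3 : Sigma3 σ α)
    (h4 : Sigma4 σ m β K C) (h5 : Sigma5 σ m A) (hα : (m : ℝ) + 1 < α)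
    (a b : ℤ) (hab : a < b) (δ : ℝ) (hδ : 0 < δ) (hδ2 : (a : ℝ) + δ < (b : ℝ) - δ)
    (C₀ K₀ : ℝ) (hC₀ : 0 < C₀) (hK₀ : 0 < K₀)
    (hdecay : ∀ x : ℝ, K₀ ≤ |x| → phiFn σ x ≤ C₀ * |x| ^ (-α - 1))
    (j : ℕ) (hj1 : 1 ≤ j) (hjm : j ≤ m)
    (x : ℝ) (hx : x ∈ Set.Icc ((a : ℝ) + δ) ((b : ℝ) - δ))
    (n : ℕ) (hn : 1 ≤ n) (hnδ : K₀ + 1 ≤ (n : ℝ) * δ) :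
    |truncMoment (phiFn σ) j a b n ((n : ℝ) * x) - A j|
      ≤ 2 * (C₀ * (2 * δ) ^ (-(α - (j : ℝ) + 1) / 2) * zetaR ((α - (j : ℝ) + 1) / 2)) *
          (n : ℝ) ^ (-(α - (j : ℝ) + 1) / 2) :=
  trunc_moment_estimate_phi_general σ α m A hmono h5 hα a b hab δ hδ C₀ K₀ hC₀ hK₀ hdecay j hj1 hjm
    x hx n hnδ
end

section
/- Let σ be a nondecreasing sigmoidal function satisfying (Σ1)–(Σ5), where (Σ4) holds with m ∈ ℕ⁺, m ≥ 2, and β > 2m, and assume α > m + 1 in (Σ3). Let a < b be integers, δ > 0 with a + δ < b − δ, and f ∈ C^m([a,b]). Then for each s = 1, …, m, lim_{n→+∞} (d^s/dx^s) F̃_n(f, x) = f^{(s)}(x), uniformly with respect to x ∈ I_δ := [a+δ, b−δ], where F̃_n(f, x) := ∑_{k=na}^{nb} f(k/n) φ_σ(nx − k). -/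
open Filter Topology MeasureTheory

/-!
Differentiating term by term, `d^s/dx^s F̃_n(f, x) = n^s ∑_k f(k/n) Ψ(nx - k)` with the kernel
`Ψ = φ_σ^{(s)}`, which decays like `|x|^{-β-1}`. The telescoping identity `∑_k φ_σ(x - k) = 1`
and (Σ5) say that the algebraic moments of `φ_σ` are independent of `x`; differentiating them `s`
times shows that `∑_k Ψ(u - k) (k - u)^j = j!/(j-s)! A_{j-s}` (with `A_0 = 1`), which vanishes for
`j < s` and equals `s!` for `j = s`. Expanding `f(k/n)` by Taylor's formula of order `m` at `x`,
the moment terms reproduce `f^{(s)}(x)` up to `O(1/n)`, and restricting the moments to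
`na ≤ k ≤ nb` costs `O(n^{-τ})` for some `τ > 0`, because `β > 2m` makes the discrete absolute
moments of `Ψ` of order up to `2m + τ` finite. The Taylor remainder is `≤ ε |k/n - x|^m` uniformly
near `x` and bounded away from it, which the absolute moments of orders `m` and `m + τ` turn into
`ε · const + O(n^{-τ})`.
-/
open Asymptotics Set

section Decay

theorem isBigO_cocompact_rpow_neg_of_abs_le {g : ℝ → ℝ} {c K q : ℝ}
    (h : ∀ y, K ≤ |y| → |g y| ≤ c * |y| ^ (-q)) :
    g =O[cocompact ℝ] (|·| ^ (-q)) :=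
  IsBigO.of_bound c <| (tendsto_norm_cocompact_atTop.eventually_ge_atTop K).mono fun y hy => by
    simpa [abs_of_nonneg (Real.rpow_nonneg (abs_nonneg y) _)] using h y hy

theorem rpow_neg_isBigO_rpow_neg {p q : ℝ} (hpq : p ≤ q) :
    (fun y : ℝ => |y| ^ (-q)) =O[cocompact ℝ] (|·| ^ (-p)) :=
  isBigO_cocompact_rpow_neg_of_abs_le (c := 1) (K := 1) fun y hy => by
    rw [abs_of_nonneg (by positivity), one_mul]
    exact Real.rpow_le_rpow_of_exponent_le hy (by linarith)

theorem rpow_neg_comp_add_const_isBigO {q : ℝ} (hq : 0 ≤ q) (c : ℝ) :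
    (fun y : ℝ => |y + c| ^ (-q)) =O[cocompact ℝ] (|·| ^ (-q)) :=
  isBigO_cocompact_rpow_neg_of_abs_le (c := 2 ^ q) (K := 2 * |c| + 1) fun y hy => by
    have hyc : |y| / 2 ≤ |y + c| := by
      have := abs_add_le (y + c) (-c)
      rw [add_neg_cancel_right, abs_neg] at this
      linarith [abs_nonneg c]
    rw [abs_of_nonneg (by positivity)]
    calc |y + c| ^ (-q) ≤ (|y| / 2) ^ (-q) :=
          Real.rpow_le_rpow_of_nonpos (by linarith [abs_nonneg c]) hyc (by linarith)
      _ = 2 ^ q * |y| ^ (-q) := by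
          rw [Real.div_rpow (abs_nonneg y) zero_le_two, Real.rpow_neg zero_le_two, div_inv_eq_mul,
            mul_comm]

theorem Asymptotics.IsBigO.comp_add_const_rpow_neg {g : ℝ → ℝ} {q : ℝ}
    (h : g =O[cocompact ℝ] (|·| ^ (-q))) (hq : 0 ≤ q) (c : ℝ) :
    (fun y => g (y + c)) =O[cocompact ℝ] (|·| ^ (-q)) :=
  (h.comp_tendsto (Homeomorph.addRight c).isClosedEmbedding.tendsto_cocompact).trans
    (rpow_neg_comp_add_const_isBigO hq c)

theorem Asymptotics.IsBigO.abs_mul_rpow {g : ℝ → ℝ} {p : ℝ}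
    (h : g =O[cocompact ℝ] (|·| ^ (-p))) (ν : ℝ) :
    (fun y => |g y| * |y| ^ ν) =O[cocompact ℝ] (|·| ^ (-(p - ν))) := by
  refine (h.norm_left.mul (isBigO_refl (fun y : ℝ => |y| ^ ν) _)).congr' .rfl ?_
  filter_upwards [tendsto_norm_cocompact_atTop.eventually_gt_atTop 0] with y hy
  rw [← Real.rpow_add (show 0 < |y| from hy)]
  ring_nf

end Decay

section TranslateSums

variable {Ψ : ℝ → ℝ} {p ν : ℝ}

theorem exists_summable_bound_comp_sub_intCast {G : ℝ → ℝ} (hG : Continuous G) {q : ℝ}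
    (hq : 1 < q) (hdec : G =O[cocompact ℝ] (|·| ^ (-q))) {K : Set ℝ} (hK : IsCompact K) :
    ∃ v : ℤ → ℝ, Summable v ∧ ∀ k : ℤ, ∀ x ∈ K, |G (x - k)| ≤ v k := by
  let F : C(ℝ, ℝ) := ⟨G, hG⟩
  let K' : TopologicalSpace.Compacts ℝ := ⟨K, hK⟩
  refine ⟨fun k => ‖(F.comp (ContinuousMap.addRight (-(k : ℝ)))).restrict K'‖, ?_, ?_⟩
  · refine summable_of_isBigO ((Real.summable_abs_int_rpow hq).comp_injective neg_injective) ?_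
    simpa [Function.comp_def] using
      (isBigO_norm_restrict_cocompact F (by linarith) hdec K').comp_tendsto
        ((Homeomorph.neg ℝ).isClosedEmbedding.tendsto_cocompact.comp Int.tendsto_coe_cofinite)
  · intro k x hx
    exact ContinuousMap.norm_coe_le_norm ((F.comp (ContinuousMap.addRight (-(k : ℝ)))).restrict K')
      ⟨x, hx⟩

theorem exists_tsum_abs_comp_sub_intCast_le {G : ℝ → ℝ} (hG : Continuous G) {q : ℝ}
    (hq : 1 < q) (hdec : G =O[cocompact ℝ] (|·| ^ (-q))) :
    ∃ D, ∀ u : ℝ, Summable (fun k : ℤ => |G (u - k)|) ∧ ∑' k : ℤ, |G (u - k)| ≤ D := by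
  obtain ⟨v, hv, hbound⟩ := exists_summable_bound_comp_sub_intCast hG hq hdec isCompact_Icc
    (K := Icc 0 1)
  refine ⟨∑' k, v k, fun u => ?_⟩
  -- `u - k = fract u - (k - ⌊u⌋)`, and `fract u ∈ [0, 1]`
  have hle : ∀ k : ℤ, |G (u - k)| ≤ v (k - ⌊u⌋) := fun k => by
    have := hbound (k - ⌊u⌋) (Int.fract u) ⟨Int.fract_nonneg u, (Int.fract_lt_one u).le⟩
    rwa [Int.fract, Int.cast_sub, sub_sub_sub_cancel_right] at this
  have hv' : Summable fun k : ℤ => v (k - ⌊u⌋) := (Equiv.subRight ⌊u⌋).summable_iff.mpr hv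
  have hsum := hv'.of_nonneg_of_le (fun k => abs_nonneg _) hle
  refine ⟨hsum, (hsum.tsum_le_tsum hle hv').trans_eq ?_⟩
  exact (Equiv.subRight ⌊u⌋).tsum_eq v

theorem continuous_abs_mul_abs_rpow (hΨ : Continuous Ψ) (hν : 0 ≤ ν) :
    Continuous fun y => |Ψ y| * |y| ^ ν :=
  (continuous_abs.comp hΨ).mul ((Real.continuous_rpow_const hν).comp continuous_abs)

theorem exists_summable_bound_abs_mul_rpow (hΨ : Continuous Ψ)
    (hdec : Ψ =O[cocompact ℝ] (|·| ^ (-p))) (hν : 0 ≤ ν) (hνp : ν + 1 < p)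
    {K : Set ℝ} (hK : IsCompact K) :
    ∃ v : ℤ → ℝ, Summable v ∧ ∀ k : ℤ, ∀ x ∈ K, |Ψ (x - k)| * |x - k| ^ ν ≤ v k := by
  obtain ⟨v, hv, hle⟩ := exists_summable_bound_comp_sub_intCast
    (continuous_abs_mul_abs_rpow hΨ hν) (by linarith) (hdec.abs_mul_rpow ν) hK
  exact ⟨v, hv, fun k x hx => (le_abs_self _).trans (hle k x hx)⟩

theorem discMoment_nonneg (Ψ : ℝ → ℝ) (ν u : ℝ) : 0 ≤ discMoment Ψ ν u :=
  tsum_nonneg fun _ => by positivity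

theorem exists_discMoment_le (hΨ : Continuous Ψ)
    (hdec : Ψ =O[cocompact ℝ] (|·| ^ (-p))) (hν : 0 ≤ ν) (hνp : ν + 1 < p) :
    ∃ D, ∀ u : ℝ, Summable (fun k : ℤ => |Ψ (u - k)| * |u - k| ^ ν) ∧ discMoment Ψ ν u ≤ D := by
  obtain ⟨D, hD⟩ := exists_tsum_abs_comp_sub_intCast_le
    (continuous_abs_mul_abs_rpow hΨ hν) (by linarith) (hdec.abs_mul_rpow ν)
  refine ⟨D, fun u => ?_⟩
  have habs : ∀ k : ℤ, |(|Ψ (u - k)| * |u - k| ^ ν)| = |Ψ (u - k)| * |u - k| ^ ν :=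
    fun k => abs_of_nonneg (by positivity)
  simpa only [habs, discMoment] using hD u

end TranslateSums

section Moments

variable {Ψ : ℝ → ℝ} {p : ℝ}

theorem summable_algMoment_terms (hΨ : Continuous Ψ) (hdec : Ψ =O[cocompact ℝ] (|·| ^ (-p))) {j : ℕ}
    (hj : (j : ℝ) + 1 < p) (x : ℝ) : Summable fun k : ℤ => Ψ (x - k) * ((k : ℝ) - x) ^ j := by
  obtain ⟨D, hD⟩ := exists_discMoment_le hΨ hdec (Nat.cast_nonneg j) hj
  refine (hD x).1.of_norm_bounded fun k => ?_
  rw [Real.norm_eq_abs, abs_mul, abs_pow, abs_sub_comm, Real.rpow_natCast]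

theorem algMoment_eq_mul_algMoment_of_hasDerivAt {Ψ' : ℝ → ℝ}
    (hderiv : ∀ y, HasDerivAt Ψ (Ψ' y) y) (hΨ' : Continuous Ψ')
    (hdec : Ψ =O[cocompact ℝ] (|·| ^ (-p))) (hdec' : Ψ' =O[cocompact ℝ] (|·| ^ (-p)))
    {j : ℕ} (hj : (j : ℝ) + 1 < p) {c : ℝ} (hconst : ∀ x, algMoment Ψ j x = c) (x : ℝ) :
    algMoment Ψ' j x = j * algMoment Ψ (j - 1) x := by
  have hΨ : Continuous Ψ := continuous_iff_continuousAt.2 fun y => (hderiv y).continuousAt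
  have hj' : ((j - 1 : ℕ) : ℝ) + 1 < p := by
    have : ((j - 1 : ℕ) : ℝ) ≤ j := by exact_mod_cast Nat.sub_le j 1
    linarith
  have hK : IsCompact (Icc (x - 1) (x + 1)) := isCompact_Icc
  obtain ⟨v, hv, hvle⟩ := exists_summable_bound_abs_mul_rpow hΨ' hdec' (Nat.cast_nonneg j) hj hK
  obtain ⟨w, hw, hwle⟩ := exists_summable_bound_abs_mul_rpow hΨ hdec (Nat.cast_nonneg _) hj' hK
  have hterm : ∀ (k : ℤ) (z : ℝ), HasDerivAt (fun z => Ψ (z - k) * ((k : ℝ) - z) ^ j)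
      (Ψ' (z - k) * ((k : ℝ) - z) ^ j - j * (Ψ (z - k) * ((k : ℝ) - z) ^ (j - 1))) z := by
    intro k z
    have h1 := (hderiv (z - k)).comp_sub_const z k
    have h2 := ((hasDerivAt_id z).const_sub (k : ℝ)).fun_pow j
    exact (h1.fun_mul h2).congr_deriv (by simp only [id]; ring)
  have hbound : ∀ (k : ℤ), ∀ z ∈ Ioo (x - 1) (x + 1),
      ‖Ψ' (z - k) * ((k : ℝ) - z) ^ j - j * (Ψ (z - k) * ((k : ℝ) - z) ^ (j - 1))‖
        ≤ v k + j * w k := by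
    intro k z hz
    have hz' := Ioo_subset_Icc_self hz
    have e : ∀ i : ℕ, |((k : ℝ) - z) ^ i| = |z - k| ^ (i : ℝ) := fun i => by
      rw [abs_pow, abs_sub_comm, Real.rpow_natCast]
    calc _ ≤ |Ψ' (z - k)| * |z - k| ^ (j : ℝ)
          + j * (|Ψ (z - k)| * |z - k| ^ ((j - 1 : ℕ) : ℝ)) := by
          rw [Real.norm_eq_abs]
          refine (abs_sub _ _).trans_eq ?_
          rw [abs_mul, abs_mul, abs_mul, e, e, Nat.abs_cast]
      _ ≤ v k + j * w k := by gcongr; exacts [hvle k z hz', hwle k z hz']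
  have hx : x ∈ Ioo (x - 1) (x + 1) := ⟨by linarith, by linarith⟩
  have hD := hasDerivAt_tsum_of_isPreconnected (hv.add (hw.mul_left (j : ℝ))) isOpen_Ioo
    isPreconnected_Ioo (fun k z _ => hterm k z) hbound hx (summable_algMoment_terms hΨ hdec hj x) hx
  have hconst' : (fun z => ∑' k : ℤ, Ψ (z - k) * ((k : ℝ) - z) ^ j) = fun _ => c :=
    funext hconst
  rw [hconst', Summable.tsum_sub (summable_algMoment_terms hΨ' hdec' hj x)
    ((summable_algMoment_terms hΨ hdec hj' x).mul_left (j : ℝ)), tsum_mul_left] at hD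
  have := hD.unique (hasDerivAt_const x c)
  unfold algMoment
  linarith

end Moments

theorem hasSum_sub_int_of_antitone {g : ℤ → ℝ} (hg : Antitone g) {l₁ l₂ : ℝ}
    (hbot : Tendsto g atBot (𝓝 l₁)) (htop : Tendsto g atTop (𝓝 l₂)) :
    HasSum (fun k => g k - g (k + 1)) (l₁ - l₂) := by
  have hpos : HasSum (fun n : ℕ => g n - g (n + 1)) (g 0 - l₂) := by
    rw [hasSum_iff_tendsto_nat_of_nonneg fun n => sub_nonneg.2 (hg (by omega))]
    have e : ∀ N : ℕ, ∑ n ∈ Finset.range N, (g n - g (n + 1)) = g 0 - g N := fun N => by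
      induction N with
      | zero => simp
      | succ N ih => rw [Finset.sum_range_succ, ih]; push_cast; ring
    simp only [e]
    exact tendsto_const_nhds.sub (htop.comp tendsto_natCast_atTop_atTop)
  have hneg : HasSum (fun n : ℕ => g (-(n + 1)) - g (-(n + 1) + 1)) (l₁ - g 0) := by
    rw [hasSum_iff_tendsto_nat_of_nonneg fun n => sub_nonneg.2 (hg (by omega))]
    have e : ∀ N : ℕ, ∑ n ∈ Finset.range N, (g (-(n + 1)) - g (-(n + 1) + 1)) = g (-N) - g 0 :=
      fun N => by
        induction N with
        | zero => simp
        | succ N ih => rw [Finset.sum_range_succ, ih]; push_cast; ring_nf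
    simp only [e]
    exact (hbot.comp (tendsto_neg_atTop_atBot.comp tendsto_natCast_atTop_atTop)).sub
      tendsto_const_nhds
  have := HasSum.of_nat_of_neg_add_one (f := fun k : ℤ => g k - g (k + 1)) hpos hneg
  rwa [sub_add_sub_cancel'] at this

section Taylor

theorem exists_abs_sub_taylorWithinEval_le {a b : ℝ} (hab : a < b) {q : ℕ} {f : ℝ → ℝ}
    (hf : ContDiffOn ℝ q f (Icc a b)) {ε : ℝ} (hε : 0 < ε) :
    ∃ h > 0, ∀ x ∈ Icc a b, ∀ y ∈ Icc a b, |y - x| ≤ h →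
      |f y - taylorWithinEval f q (Icc a b) x y| ≤ ε * |y - x| ^ q := by
  induction q generalizing f with
  | zero =>
    obtain ⟨h, hh, hclose⟩ := Metric.uniformContinuousOn_iff.1
      (isCompact_Icc.uniformContinuousOn_of_continuous hf.continuousOn) ε hε
    refine ⟨h / 2, by positivity, fun x hx y hy hxy => ?_⟩
    have := hclose y hy x hx (by rw [Real.dist_eq]; linarith)
    rw [Real.dist_eq] at this
    simpa using this.le
  | succ q ih =>
    have hs : UniqueDiffOn ℝ (Icc a b) := uniqueDiffOn_Icc hab
    obtain ⟨h, hh, hderiv⟩ := ih (hf.derivWithin hs (by norm_cast))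
    refine ⟨h, hh, fun x hx y hy hxy => ?_⟩
    have hseg : uIcc x y ⊆ Icc a b := uIcc_subset_Icc hx hy
    -- the remainder vanishes at `x` and its derivative is the remainder of `f'`
    have hF : ∀ t ∈ uIcc x y,
        HasDerivWithinAt (fun t => f t - taylorWithinEval f (q + 1) (Icc a b) x t)
          (derivWithin f (Icc a b) t - taylorWithinEval (derivWithin f (Icc a b)) q (Icc a b) x t)
          (uIcc x y) t := fun t ht =>
      (((hf.differentiableOn (by simp) t (hseg ht)).hasDerivWithinAt).mono hseg).sub
        (hasDerivAt_taylorWithinEval_succ f q).hasDerivWithinAt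
    have hF' : ∀ t ∈ uIcc x y, ‖derivWithin f (Icc a b) t
        - taylorWithinEval (derivWithin f (Icc a b)) q (Icc a b) x t‖ ≤ ε * |y - x| ^ q := by
      intro t ht
      have htx : |t - x| ≤ |y - x| := abs_sub_left_of_mem_uIcc ht
      exact (hderiv x hx t (hseg ht) (htx.trans hxy)).trans (by gcongr)
    have := (convex_uIcc x y).norm_image_sub_le_of_norm_hasDerivWithin_le hF hF'
      left_mem_uIcc right_mem_uIcc
    simpa [taylorWithinEval_self, pow_succ, mul_assoc] using this

theorem exists_abs_sub_taylorWithinEval_le_add {a b : ℝ} (hab : a < b) {q : ℕ} {f : ℝ → ℝ}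
    (hf : ContDiffOn ℝ q f (Icc a b)) {r : ℝ} (hr : 0 ≤ r) {ε : ℝ} (hε : 0 < ε) :
    ∃ C ≥ 0, ∀ x ∈ Icc a b, ∀ y ∈ Icc a b,
      |f y - taylorWithinEval f q (Icc a b) x y| ≤ ε * |y - x| ^ q + C * |y - x| ^ r := by
  obtain ⟨h, hh, hnear⟩ := exists_abs_sub_taylorWithinEval_le hab hf hε
  have hcont : ContinuousOn (fun z : ℝ × ℝ => f z.2 - taylorWithinEval f q (Icc a b) z.1 z.2)
      (Icc a b ×ˢ Icc a b) := by
    simp_rw [taylor_within_apply]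
    refine (hf.continuousOn.comp continuousOn_snd fun z hz => hz.2).sub
      (continuousOn_finsetSum _ fun j hj => ?_)
    have hpoly : Continuous fun z : ℝ × ℝ => (j.factorial : ℝ)⁻¹ * (z.2 - z.1) ^ j := by fun_prop
    have hderiv := hf.continuousOn_iteratedDerivWithin
      (by exact_mod_cast Finset.mem_range_succ_iff.1 hj) (uniqueDiffOn_Icc hab)
    exact hpoly.continuousOn.smul (hderiv.comp continuousOn_fst fun z hz => hz.1)
  obtain ⟨B, hB⟩ := (isCompact_Icc.prod isCompact_Icc).exists_bound_of_continuousOn hcont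
  refine ⟨max B 0 / h ^ r, by positivity, fun x hx y hy => ?_⟩
  rcases le_or_gt |y - x| h with hxy | hxy
  · exact (hnear x hx y hy hxy).trans (le_add_of_nonneg_right (by positivity))
  · -- far from the diagonal the remainder is bounded, and `1 ≤ (|y - x| / h) ^ r`
    calc |f y - taylorWithinEval f q (Icc a b) x y| ≤ max B 0 * 1 := by
          simpa using (hB (x, y) ⟨hx, hy⟩).trans (le_max_left B 0)
      _ ≤ max B 0 * (|y - x| / h) ^ r := by
          gcongr; exact Real.one_le_rpow ((one_le_div hh).2 hxy.le) hr
      _ ≤ ε * |y - x| ^ q + max B 0 / h ^ r * |y - x| ^ r := by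
          rw [Real.div_rpow (abs_nonneg _) hh.le, mul_div, div_mul_eq_mul_div]
          exact le_add_of_nonneg_left (by positivity)

theorem exists_abs_iteratedDerivWithin_le {a b : ℝ} (hab : a < b) {m : ℕ} {f : ℝ → ℝ}
    (hf : ContDiffOn ℝ m f (Icc a b)) :
    ∃ M, ∀ j ≤ m, ∀ x ∈ Icc a b, |iteratedDerivWithin j f (Icc a b) x| ≤ M := by
  have : ∀ j ≤ m, ∃ M, ∀ x ∈ Icc a b, |iteratedDerivWithin j f (Icc a b) x| ≤ M := fun j hj =>
    isCompact_Icc.exists_bound_of_continuousOn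
      (hf.continuousOn_iteratedDerivWithin (by exact_mod_cast hj) (uniqueDiffOn_Icc hab))
  choose! M hM using this
  refine ⟨∑ j ∈ Finset.range (m + 1), |M j|, fun j hj x hx => (hM j hj x hx).trans ?_⟩
  exact (le_abs_self _).trans (Finset.single_le_sum (f := fun j => |M j|)
    (fun _ _ => abs_nonneg _) (Finset.mem_range_succ_iff.2 hj))

end Taylor

theorem abs_sum_sub_le_tsum_of_hasSum {F W : ℤ → ℝ} {a : ℝ} (hF : HasSum F a) (hW : Summable W)
    (hW0 : ∀ k, 0 ≤ W k) (Λ : Finset ℤ) (h : ∀ k ∉ Λ, |F k| ≤ W k) :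
    |∑ k ∈ Λ, F k - a| ≤ ∑' k, W k := by
  have hcompl := (Λ.hasSum_iff_compl).1 hF
  have hW' := ((Λ.summable_compl_iff).2 hW).hasSum
  rw [abs_sub_comm]
  refine (abs_le.2 ⟨?_, ?_⟩).trans (hW.tsum_subtype_le W {k | k ∉ Λ} hW0)
  · exact neg_le.1 (hasSum_le (fun k : {k // k ∉ Λ} => neg_le.1 (abs_le.1 (h k k.2)).1)
      hcompl.neg hW')
  · exact hasSum_le (fun k : {k // k ∉ Λ} => (abs_le.1 (h k k.2)).2) hcompl hW'

theorem rpow_le_rpow_neg_mul_rpow_add {M y ν r : ℝ} (hM : 0 < M) (hMy : M ≤ y) (hr : 0 ≤ r) :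
    y ^ ν ≤ M ^ (-r) * y ^ (ν + r) := by
  have hy : 0 < y := hM.trans_le hMy
  rw [Real.rpow_add hy, Real.rpow_neg hM.le, mul_left_comm, ← div_eq_inv_mul]
  exact le_mul_of_one_le_right (by positivity)
    ((one_le_div (by positivity)).2 (Real.rpow_le_rpow hM.le hMy hr))

theorem pow_mul_rpow_neg_le {N t : ℝ} {s m : ℕ} (hN : 1 ≤ N) (hsm : s ≤ m) :
    N ^ s * N ^ (-(m + t)) ≤ N ^ (-t) := by
  rw [← Real.rpow_natCast, ← Real.rpow_add (by linarith)]
  exact Real.rpow_le_rpow_of_exponent_le hN (by linarith [(Nat.cast_le (α := ℝ)).2 hsm])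

theorem abs_sum_mul_pow_div_pow_sub_le (c T μ : ℕ → ℝ) {m s : ℕ} (hsm : s ≤ m) {N : ℝ}
    (hN : 1 ≤ N) (hμ_lt : ∀ j < s, μ j = 0) (hμ_s : μ s = s.factorial) :
    |∑ j ∈ Finset.range (m + 1), c j * (N ^ s / N ^ j) * T j - c s * s.factorial| ≤
      ∑ j ∈ Finset.range (m + 1), |c j| * (N ^ s * |T j - μ j| + |μ j| / N) := by
  have hs : s ∈ Finset.range (m + 1) := Finset.mem_range_succ_iff.2 hsm
  have hdiag : c s * μ s = ∑ j ∈ Finset.range (m + 1), if s = j then c j * μ j else 0 := by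
    rw [Finset.sum_ite_eq, if_pos hs]
  rw [← hμ_s, hdiag, ← Finset.sum_sub_distrib]
  refine (Finset.abs_sum_le_sum_abs _ _).trans (Finset.sum_le_sum fun j _ => ?_)
  have hNj : 1 ≤ N ^ j := one_le_pow₀ hN
  have hN0 : 0 < N := zero_lt_one.trans_le hN
  -- split off `c j * (N ^ s / N ^ j) * (T j - μ j)`; what is left vanishes unless `s < j`
  have hrest : |N ^ s / N ^ j * μ j - if s = j then μ j else 0| ≤ |μ j| / N := by
    rcases lt_trichotomy j s with hjs | rfl | hjs
    · simp [hμ_lt j hjs, hjs.ne']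
    · rw [div_self (pow_ne_zero _ hN0.ne'), if_pos rfl, one_mul, sub_self, abs_zero]
      positivity
    · rw [if_neg hjs.ne, sub_zero, abs_mul, abs_of_pos (by positivity), div_eq_mul_inv _ N,
        mul_comm |μ j|]
      gcongr
      rw [div_le_iff₀ (by positivity), inv_mul_eq_div, le_div_iff₀ hN0, ← pow_succ]
      exact pow_le_pow_right₀ hN hjs
  calc |c j * (N ^ s / N ^ j) * T j - if s = j then c j * μ j else 0|
      = |c j| *
          |N ^ s / N ^ j * (T j - μ j) + (N ^ s / N ^ j * μ j - if s = j then μ j else 0)| := by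
        rw [← abs_mul]; congr 1; split_ifs <;> ring
    _ ≤ |c j| * (N ^ s * |T j - μ j| + |μ j| / N) := by
        gcongr
        refine (abs_add_le _ _).trans (add_le_add ?_ hrest)
        rw [abs_mul, abs_of_pos (by positivity)]
        gcongr
        exact div_le_self (by positivity) hNj

theorem pow_mul_sum_eq_moments_add_remainder (f Ψ : ℝ → ℝ) (S : Set ℝ) (m s : ℕ)
    (Λ : Finset ℤ) {N : ℝ} (hN : N ≠ 0) (x : ℝ) :
    N ^ s * ∑ k ∈ Λ, f (k / N) * Ψ (N * x - k) =
      ∑ j ∈ Finset.range (m + 1), iteratedDerivWithin j f S x / j.factorial * (N ^ s / N ^ j) *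
          ∑ k ∈ Λ, Ψ (N * x - k) * ((k : ℝ) - N * x) ^ j +
        N ^ s * ∑ k ∈ Λ, (f (k / N) - taylorWithinEval f m S x (k / N)) * Ψ (N * x - k) := by
  have hP : ∀ k : ℤ, taylorWithinEval f m S x (k / N) = ∑ j ∈ Finset.range (m + 1),
      iteratedDerivWithin j f S x / j.factorial / N ^ j * ((k : ℝ) - N * x) ^ j := fun k => by
    rw [taylor_within_apply]
    refine Finset.sum_congr rfl fun j _ => ?_
    rw [smul_eq_mul, show (k : ℝ) / N - x = ((k : ℝ) - N * x) / N by field_simp, div_pow]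
    field_simp
  calc N ^ s * ∑ k ∈ Λ, f (k / N) * Ψ (N * x - k)
      = N ^ s * ∑ k ∈ Λ, taylorWithinEval f m S x (k / N) * Ψ (N * x - k) +
          N ^ s * ∑ k ∈ Λ, (f (k / N) - taylorWithinEval f m S x (k / N)) * Ψ (N * x - k) := by
        rw [← mul_add, ← Finset.sum_add_distrib]
        simp_rw [← add_mul, add_sub_cancel]
    _ = _ := by
        congr 1
        simp_rw [hP, Finset.sum_mul, Finset.mul_sum]
        rw [Finset.sum_comm]
        refine Finset.sum_congr rfl fun j _ => Finset.sum_congr rfl fun k _ => ?_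
        ring

theorem intCast_div_mem_Icc {a b : ℤ} {n : ℕ} (hn : 0 < n) {k : ℤ}
    (hk : k ∈ Finset.Icc ((n : ℤ) * a) (n * b)) : (k : ℝ) / n ∈ Icc (a : ℝ) b := by
  rw [Finset.mem_Icc] at hk
  have hn' : (0 : ℝ) < n := Nat.cast_pos.2 hn
  constructor
  · rw [le_div_iff₀ hn', mul_comm]; exact_mod_cast hk.1
  · rw [div_le_iff₀ hn', mul_comm]; exact_mod_cast hk.2

theorem mul_le_abs_mul_sub_of_notMem_Icc {a b : ℤ} {n : ℕ} {δ x : ℝ}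
    (hx : x ∈ Icc (a + δ : ℝ) (b - δ)) {k : ℤ} (hk : k ∉ Finset.Icc ((n : ℤ) * a) (n * b)) :
    n * δ ≤ |n * x - k| := by
  have hn : (0 : ℝ) ≤ n := n.cast_nonneg
  rw [Finset.mem_Icc, not_and_or, not_le, not_le] at hk
  rcases hk with hk | hk
  · have : (k : ℝ) < n * a := by exact_mod_cast hk
    have := mul_le_mul_of_nonneg_left hx.1 hn
    exact le_abs.2 (Or.inl (by linarith))
  · have : (n * b : ℝ) < k := by exact_mod_cast hk
    have := mul_le_mul_of_nonneg_left hx.2 hn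
    exact le_abs.2 (Or.inr (by linarith))

section KernelApproximation

variable {Ψ : ℝ → ℝ} {m s : ℕ} {a b : ℤ} {f : ℝ → ℝ} {n : ℕ} {x : ℝ}

theorem abs_sum_moment_sub_le {Λ : Finset ℤ} {u M μ r : ℝ} {j m : ℕ}
    (hμ : HasSum (fun k : ℤ => Ψ (u - k) * ((k : ℝ) - u) ^ j) μ)
    (hsum : Summable fun k : ℤ => |Ψ (u - k)| * |u - k| ^ ((m : ℝ) + r))
    (hjm : j ≤ m) (hM : 1 ≤ M) (hr : 0 ≤ r) (hΛ : ∀ k ∉ Λ, M ≤ |u - k|) :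
    |∑ k ∈ Λ, Ψ (u - k) * ((k : ℝ) - u) ^ j - μ| ≤ M ^ (-r) * discMoment Ψ (m + r) u := by
  rw [discMoment, ← tsum_mul_left]
  refine abs_sum_sub_le_tsum_of_hasSum hμ (hsum.mul_left _) (fun k => by positivity) Λ
    fun k hk => ?_
  have h1 : 1 ≤ |u - k| := hM.trans (hΛ k hk)
  rw [abs_mul, abs_pow, abs_sub_comm, mul_left_comm]
  gcongr
  calc |u - k| ^ j ≤ |u - k| ^ m := pow_le_pow_right₀ h1 hjm
    _ = |u - k| ^ (m : ℝ) := (Real.rpow_natCast _ m).symm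
    _ ≤ M ^ (-r) * |u - k| ^ ((m : ℝ) + r) :=
      rpow_le_rpow_neg_mul_rpow_add (by linarith) (hΛ k hk) hr

theorem sum_abs_mul_abs_div_sub_rpow_le {N ν : ℝ} (hN : 0 < N) (x : ℝ)
    (hsum : Summable fun k : ℤ => |Ψ (N * x - k)| * |N * x - k| ^ ν) (Λ : Finset ℤ) :
    ∑ k ∈ Λ, |Ψ (N * x - k)| * |k / N - x| ^ ν ≤ N ^ (-ν) * discMoment Ψ ν (N * x) := by
  have e : ∀ k : ℤ, |Ψ (N * x - k)| * |k / N - x| ^ ν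
      = N ^ (-ν) * (|Ψ (N * x - k)| * |N * x - k| ^ ν) := fun k => by
    rw [show (k : ℝ) / N - x = -((N * x - k) / N) by field_simp; ring, abs_neg, abs_div,
      abs_of_pos hN, Real.div_rpow (abs_nonneg _) hN.le, Real.rpow_neg hN.le]
    ring
  simp_rw [e, ← Finset.mul_sum, discMoment]
  gcongr
  exact hsum.sum_le_tsum Λ fun k _ => by positivity

theorem abs_moments_sub_iteratedDerivWithin_le {μ : ℕ → ℝ} {δ τ D M : ℝ} (hsm : s ≤ m)
    (hmom : ∀ j ≤ m, ∀ u, HasSum (fun k : ℤ => Ψ (u - k) * ((k : ℝ) - u) ^ j) (μ j))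
    (hμ_lt : ∀ j < s, μ j = 0) (hμ_s : μ s = s.factorial)
    (hD : ∀ u, Summable (fun k : ℤ => |Ψ (u - k)| * |u - k| ^ ((m : ℝ) + (m + τ))) ∧
      discMoment Ψ (m + (m + τ)) u ≤ D)
    (hM : ∀ j ≤ m, |iteratedDerivWithin j f (Icc a b) x| ≤ M) (hδ : 0 < δ) (hτ : 0 ≤ τ)
    (hn : 1 ≤ (n : ℝ)) (hnδ : 1 ≤ n * δ) (hx : x ∈ Icc (a + δ : ℝ) (b - δ)) :
    |∑ j ∈ Finset.range (m + 1), iteratedDerivWithin j f (Icc a b) x / j.factorial *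
        ((n : ℝ) ^ s / n ^ j) * ∑ k ∈ Finset.Icc ((n : ℤ) * a) (n * b),
          Ψ (n * x - k) * ((k : ℝ) - n * x) ^ j - iteratedDerivWithin s f (Icc a b) x| ≤
      ∑ j ∈ Finset.range (m + 1), M * (δ ^ (-(m + τ)) * D * n ^ (-τ) + |μ j| / n) := by
  have key := abs_sum_mul_pow_div_pow_sub_le (fun j => iteratedDerivWithin j f (Icc a b) x /
    j.factorial) (fun j => ∑ k ∈ Finset.Icc ((n : ℤ) * a) (n * b),
      Ψ (n * x - k) * ((k : ℝ) - n * x) ^ j) μ hsm hn hμ_lt hμ_s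
  rw [div_mul_cancel₀ _ (Nat.cast_ne_zero.2 s.factorial_ne_zero)] at key
  refine key.trans (Finset.sum_le_sum fun j hj => ?_)
  have hjm : j ≤ m := Finset.mem_range_succ_iff.1 hj
  have hc : |iteratedDerivWithin j f (Icc a b) x / j.factorial| ≤ M := by
    rw [abs_div, Nat.abs_cast]
    exact (div_le_self (abs_nonneg _) (Nat.one_le_cast.2 j.factorial_pos)).trans (hM j hjm)
  have hT := abs_sum_moment_sub_le (hmom j hjm (n * x)) (hD (n * x)).1 hjm hnδ
    (by positivity) fun k hk => mul_le_abs_mul_sub_of_notMem_Icc hx hk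
  have hT' : (n : ℝ) ^ s * |∑ k ∈ Finset.Icc ((n : ℤ) * a) (n * b),
      Ψ (n * x - k) * ((k : ℝ) - n * x) ^ j - μ j| ≤ δ ^ (-(m + τ)) * D * n ^ (-τ) := by
    have hD0 : 0 ≤ D := (discMoment_nonneg ..).trans (hD 0).2
    calc _ ≤ (n : ℝ) ^ s * ((n * δ) ^ (-(m + τ)) * D) := by
          gcongr; exact hT.trans (by gcongr; exact (hD _).2)
      _ = δ ^ (-(m + τ)) * D * ((n : ℝ) ^ s * n ^ (-(m + τ))) := by
          rw [Real.mul_rpow (by positivity) hδ.le]; ring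
      _ ≤ δ ^ (-(m + τ)) * D * n ^ (-τ) := by gcongr; exact pow_mul_rpow_neg_le hn hsm
  exact mul_le_mul hc (by gcongr) (by positivity) ((abs_nonneg _).trans hc)

theorem pow_mul_abs_sum_remainder_le {ε C τ D₀ D₁ : ℝ} (hsm : s ≤ m) (hε : 0 ≤ ε) (hC : 0 ≤ C)
    (hR : ∀ y ∈ Icc (a : ℝ) b,
      |f y - taylorWithinEval f m (Icc a b) x y| ≤ ε * |y - x| ^ m + C * |y - x| ^ ((m : ℝ) + τ))
    (hD₀ : ∀ u, Summable (fun k : ℤ => |Ψ (u - k)| * |u - k| ^ (m : ℝ)) ∧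
      discMoment Ψ m u ≤ D₀)
    (hD₁ : ∀ u, Summable (fun k : ℤ => |Ψ (u - k)| * |u - k| ^ ((m : ℝ) + τ)) ∧
      discMoment Ψ (m + τ) u ≤ D₁)
    (hn : 1 ≤ (n : ℝ)) :
    (n : ℝ) ^ s * |∑ k ∈ Finset.Icc ((n : ℤ) * a) (n * b),
        (f (k / n) - taylorWithinEval f m (Icc a b) x (k / n)) * Ψ (n * x - k)| ≤
      ε * D₀ + C * D₁ * n ^ (-τ) := by
  have hn0 : (0 : ℝ) < n := by linarith
  set Λ := Finset.Icc ((n : ℤ) * a) (n * b)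
  have hsum : |∑ k ∈ Λ, (f (k / n) - taylorWithinEval f m (Icc a b) x (k / n)) * Ψ (n * x - k)|
      ≤ ε * (n ^ (-(m : ℝ)) * D₀) + C * (n ^ (-((m : ℝ) + τ)) * D₁) :=
    calc _ ≤ ∑ k ∈ Λ, (ε * (|Ψ (n * x - k)| * |k / n - x| ^ (m : ℝ)) +
          C * (|Ψ (n * x - k)| * |k / n - x| ^ ((m : ℝ) + τ))) := by
          refine (Finset.abs_sum_le_sum_abs _ _).trans (Finset.sum_le_sum fun k hk => ?_)
          have := hR _ (intCast_div_mem_Icc (Nat.cast_pos.1 hn0) hk)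
          rw [abs_mul, Real.rpow_natCast]
          nlinarith [abs_nonneg (Ψ (n * x - k))]
      _ ≤ _ := by
          rw [Finset.sum_add_distrib, ← Finset.mul_sum, ← Finset.mul_sum]
          gcongr
          · exact (sum_abs_mul_abs_div_sub_rpow_le hn0 x (hD₀ _).1 Λ).trans
              (by gcongr; exact (hD₀ _).2)
          · exact (sum_abs_mul_abs_div_sub_rpow_le hn0 x (hD₁ _).1 Λ).trans
              (by gcongr; exact (hD₁ _).2)
  have hD₀' : 0 ≤ D₀ := (discMoment_nonneg ..).trans (hD₀ 0).2
  have hD₁' : 0 ≤ D₁ := (discMoment_nonneg ..).trans (hD₁ 0).2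
  calc _ ≤ (n : ℝ) ^ s * (ε * (n ^ (-(m : ℝ)) * D₀) + C * (n ^ (-((m : ℝ) + τ)) * D₁)) := by
        gcongr
    _ = ε * D₀ * ((n : ℝ) ^ s * n ^ (-((m : ℝ) + 0))) +
          C * D₁ * ((n : ℝ) ^ s * n ^ (-((m : ℝ) + τ))) := by
        rw [add_zero]; ring
    _ ≤ ε * D₀ * (n : ℝ) ^ (-(0 : ℝ)) + C * D₁ * n ^ (-τ) := by
        gcongr <;> exact pow_mul_rpow_neg_le hn hsm
    _ = ε * D₀ + C * D₁ * n ^ (-τ) := by rw [neg_zero, Real.rpow_zero, mul_one]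

theorem abs_pow_mul_sum_sub_iteratedDerivWithin_le {μ : ℕ → ℝ} {δ τ ε C D₀ D₁ D₂ M : ℝ}
    (hsm : s ≤ m) (hmom : ∀ j ≤ m, ∀ u, HasSum (fun k : ℤ => Ψ (u - k) * ((k : ℝ) - u) ^ j) (μ j))
    (hμ_lt : ∀ j < s, μ j = 0) (hμ_s : μ s = s.factorial)
    (hD₀ : ∀ u, Summable (fun k : ℤ => |Ψ (u - k)| * |u - k| ^ (m : ℝ)) ∧
      discMoment Ψ m u ≤ D₀)
    (hD₁ : ∀ u, Summable (fun k : ℤ => |Ψ (u - k)| * |u - k| ^ ((m : ℝ) + τ)) ∧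
      discMoment Ψ (m + τ) u ≤ D₁)
    (hD₂ : ∀ u, Summable (fun k : ℤ => |Ψ (u - k)| * |u - k| ^ ((m : ℝ) + (m + τ))) ∧
      discMoment Ψ (m + (m + τ)) u ≤ D₂)
    (hM : ∀ j ≤ m, |iteratedDerivWithin j f (Icc a b) x| ≤ M) (hε : 0 ≤ ε) (hC : 0 ≤ C)
    (hR : ∀ y ∈ Icc (a : ℝ) b,
      |f y - taylorWithinEval f m (Icc a b) x y| ≤ ε * |y - x| ^ m + C * |y - x| ^ ((m : ℝ) + τ))
    (hδ : 0 < δ) (hτ : 0 ≤ τ) (hn : 1 ≤ (n : ℝ)) (hnδ : 1 ≤ n * δ)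
    (hx : x ∈ Icc (a + δ : ℝ) (b - δ)) :
    |(n : ℝ) ^ s * ∑ k ∈ Finset.Icc ((n : ℤ) * a) (n * b), f (k / n) * Ψ (n * x - k) -
        iteratedDerivWithin s f (Icc a b) x| ≤
      ε * D₀ + (C * D₁ * n ^ (-τ) +
        ∑ j ∈ Finset.range (m + 1), M * (δ ^ (-(m + τ)) * D₂ * n ^ (-τ) + |μ j| / n)) := by
  rw [pow_mul_sum_eq_moments_add_remainder f Ψ _ m s _ (by positivity) x, add_sub_right_comm]
  refine (abs_add_le _ _).trans ?_
  rw [abs_mul, abs_of_nonneg (by positivity : (0 : ℝ) ≤ (n : ℝ) ^ s)]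
  refine (add_le_add (abs_moments_sub_iteratedDerivWithin_le hsm hmom hμ_lt hμ_s hD₂ hM hδ hτ hn
    hnδ hx) (pow_mul_abs_sum_remainder_le hsm hε hC hR hD₀ hD₁ hn)).trans_eq ?_
  ring

theorem tendstoUniformlyOn_pow_mul_sum_kernel {p : ℝ} {μ : ℕ → ℝ} (hΨ : Continuous Ψ)
    (hdec : Ψ =O[cocompact ℝ] (|·| ^ (-p))) (hp : 2 * (m : ℝ) + 1 < p) (hsm : s ≤ m)
    (hmom : ∀ j ≤ m, ∀ u, HasSum (fun k : ℤ => Ψ (u - k) * ((k : ℝ) - u) ^ j) (μ j))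
    (hμ_lt : ∀ j < s, μ j = 0) (hμ_s : μ s = s.factorial) (hab : a < b) {δ : ℝ} (hδ : 0 < δ)
    (hf : ContDiffOn ℝ m f (Icc (a : ℝ) b)) :
    TendstoUniformlyOn (fun (n : ℕ) x => (n : ℝ) ^ s *
        ∑ k ∈ Finset.Icc ((n : ℤ) * a) (n * b), f (k / n) * Ψ (n * x - k))
      (iteratedDerivWithin s f (Icc a b)) atTop (Icc (a + δ : ℝ) (b - δ)) := by
  have hab' : (a : ℝ) < b := Int.cast_lt.2 hab
  -- absolute moments of order up to `2m + τ` are finite, while truncating the moments and the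
  -- Taylor remainder both cost a factor `n ^ s * n ^ (-(m + τ)) ≤ n ^ (-τ)`
  set τ := (p - 2 * m - 1) / 2
  have hτ : 0 < τ := by simp only [τ]; linarith
  have hτp : 2 * (m : ℝ) + τ + 1 < p := by simp only [τ]; linarith
  obtain ⟨D₀, hD₀⟩ := exists_discMoment_le hΨ hdec m.cast_nonneg (ν := m) (by linarith)
  obtain ⟨D₁, hD₁⟩ := exists_discMoment_le hΨ hdec (ν := m + τ) (by positivity) (by linarith)
  obtain ⟨D₂, hD₂⟩ := exists_discMoment_le hΨ hdec (ν := m + (m + τ)) (by positivity)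
    (by linarith)
  obtain ⟨M, hM⟩ := exists_abs_iteratedDerivWithin_le hab' hf
  rw [Metric.tendstoUniformlyOn_iff]
  intro ε hε
  have hD₀0 : 0 ≤ D₀ := (discMoment_nonneg ..).trans (hD₀ 0).2
  set ε' := ε / (2 * (D₀ + 1))
  have hε' : ε' * D₀ < ε / 2 := by
    rw [div_mul_eq_mul_div, div_lt_div_iff₀ (by positivity) two_pos]
    nlinarith
  obtain ⟨C, hC0, hC⟩ := exists_abs_sub_taylorWithinEval_le_add hab' hf (r := m + τ)
    (by positivity) (ε := ε') (by positivity)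
  set E : ℕ → ℝ := fun n => C * D₁ * n ^ (-τ) +
    ∑ j ∈ Finset.range (m + 1), M * (δ ^ (-(m + τ)) * D₂ * n ^ (-τ) + |μ j| / n)
  have hE : Tendsto E atTop (𝓝 0) := by
    have h₁ : Tendsto (fun n : ℕ => (n : ℝ) ^ (-τ)) atTop (𝓝 0) :=
      (tendsto_rpow_neg_atTop hτ).comp tendsto_natCast_atTop_atTop
    have h₂ := tendsto_one_div_atTop_nhds_zero_nat (𝕜 := ℝ)
    have := (h₁.const_mul (C * D₁)).add (tendsto_finsetSum (Finset.range (m + 1)) fun j _ =>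
      ((h₁.const_mul (δ ^ (-(m + τ)) * D₂)).add (h₂.const_mul |μ j|)).const_mul M)
    simpa only [mul_zero, add_zero, Finset.sum_const_zero, mul_one_div] using this
  filter_upwards [hE.eventually (gt_mem_nhds (half_pos hε)), eventually_ge_atTop 1,
    (tendsto_natCast_atTop_atTop.atTop_mul_const hδ).eventually_ge_atTop 1]
    with n hEn hn hnδ x hx
  have hxS : x ∈ Icc (a : ℝ) b := ⟨by linarith [hx.1], by linarith [hx.2]⟩
  rw [Real.dist_eq, abs_sub_comm]
  calc _ ≤ ε' * D₀ + E n :=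
        abs_pow_mul_sum_sub_iteratedDerivWithin_le hsm hmom hμ_lt hμ_s hD₀ hD₁ hD₂
          (hM · · x hxS) (by positivity) hC0 (hC x hxS) hδ hτ.le (Nat.one_le_cast.2 hn) hnδ hx
    _ < ε / 2 + ε / 2 := add_lt_add hε' hEn
    _ = ε := add_halves ε

end KernelApproximation

theorem iteratedDeriv_sum_mul_comp_mul_sub {Φ : ℝ → ℝ} {s : ℕ} (hΦ : ContDiff ℝ s Φ)
    (Λ : Finset ℤ) (c : ℤ → ℝ) (t x : ℝ) :
    iteratedDeriv s (fun y => ∑ k ∈ Λ, c k * Φ (t * y - k)) x =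
      t ^ s * ∑ k ∈ Λ, c k * iteratedDeriv s Φ (t * x - k) := by
  have hΦk : ∀ k : ℤ, ContDiff ℝ s fun z => Φ (z - k) := fun k =>
    hΦ.comp (contDiff_id.sub contDiff_const)
  have hcomp : ∀ k : ℤ, iteratedDeriv s (fun y => Φ (t * y - k)) x =
      t ^ s * iteratedDeriv s Φ (t * x - k) := fun k => by
    rw [iteratedDeriv_comp_const_mul (hΦk k) t, iteratedDeriv_comp_sub_const]
  rw [iteratedDeriv_fun_sum (f := fun k y => c k * Φ (t * y - k)) fun k _ =>
    (contDiff_const.mul ((hΦk k).comp (contDiff_const.mul contDiff_id))).contDiffAt,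
    Finset.mul_sum]
  refine Finset.sum_congr rfl fun k _ => ?_
  rw [iteratedDeriv_const_mul_field, hcomp]
  ring

section Sigmoidal

variable {σ : ℝ → ℝ} {α β : ℝ} {m : ℕ} {K C A : ℕ → ℝ}

theorem Sigmoidal.nonneg (hσ : Sigmoidal σ) (hmono : Monotone σ) (x : ℝ) : 0 ≤ σ x :=
  le_of_tendsto hσ.2.1 ((eventually_le_atBot x).mono fun _ hy => hmono hy)

theorem phiFn_neg (h1 : Sigma1 σ) (y : ℝ) : phiFn σ (-y) = phiFn σ y := by
  have h : ∀ t, σ (-t) = 1 - σ t := fun t => by linarith [h1 t]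
  rw [phiFn, phiFn, show -y + 1 = -(y - 1) by ring, show -y - 1 = -(y + 1) by ring, h, h]
  ring

theorem hasSum_phiFn (hσ : Sigmoidal σ) (hmono : Monotone σ) (x : ℝ) :
    HasSum (fun k : ℤ => phiFn σ (x - k)) 1 := by
  have hg : Antitone fun k : ℤ => σ (x - k + 1) := fun i j hij =>
    hmono (by linarith [(Int.cast_le (R := ℝ)).2 hij])
  have hbot : Tendsto (fun k : ℤ => σ (x - k + 1)) atBot (𝓝 1) := by
    refine hσ.2.2.comp (tendsto_atTop_add_const_right _ 1 ?_)
    simpa [sub_eq_add_neg] using tendsto_atTop_add_const_left _ x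
      (tendsto_neg_atBot_atTop.comp (tendsto_intCast_atBot_iff.2 tendsto_id))
  have htop : Tendsto (fun k : ℤ => σ (x - k + 1)) atTop (𝓝 0) := by
    refine hσ.2.1.comp (tendsto_atBot_add_const_right _ 1 ?_)
    simpa [sub_eq_add_neg] using tendsto_atBot_add_const_left _ x
      (tendsto_neg_atTop_atBot.comp (tendsto_intCast_atTop_iff.2 tendsto_id))
  -- `2 φ(x - k) = d k + d (k + 1)` for the telescoping terms `d k = σ (x - k + 1) - σ (x - k)`
  have hd := hasSum_sub_int_of_antitone hg hbot htop
  have hd' := (Equiv.addRight (1 : ℤ)).hasSum_iff.2 hd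
  have := (hd.add hd').div_const 2
  rw [sub_zero, show ((1 : ℝ) + 1) / 2 = 1 by norm_num] at this
  refine this.congr_fun fun k => ?_
  simp only [phiFn, Function.comp, Equiv.coe_addRight, Int.cast_add, Int.cast_one]
  ring_nf

theorem contDiff_phiFn {n : WithTop ℕ∞} (hσ : ContDiff ℝ n σ) : ContDiff ℝ n (phiFn σ) :=
  ((hσ.comp (contDiff_id.add contDiff_const)).sub
    (hσ.comp (contDiff_id.sub contDiff_const))).div_const 2

theorem iteratedDeriv_phiFn {r : ℕ} (hσ : ContDiff ℝ r σ) :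
    iteratedDeriv r (phiFn σ) =
      fun y => (iteratedDeriv r σ (y + 1) - iteratedDeriv r σ (y - 1)) / 2 := by
  funext y
  have h₁ : ContDiff ℝ r fun z => σ (z + 1) := hσ.comp (contDiff_id.add contDiff_const)
  have h₂ : ContDiff ℝ r fun z => σ (z - 1) := hσ.comp (contDiff_id.sub contDiff_const)
  change iteratedDeriv r (fun z => (σ (z + 1) - σ (z - 1)) / 2) y = _
  rw [iteratedDeriv_div_const, iteratedDeriv_fun_sub h₁.contDiffAt h₂.contDiffAt,
    iteratedDeriv_comp_add_const, iteratedDeriv_comp_sub_const]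

theorem isBigO_phiFn (hσ : Sigmoidal σ) (hmono : Monotone σ) (h1 : Sigma1 σ)
    (h3 : Sigma3 σ α) : phiFn σ =O[cocompact ℝ] (|·| ^ (-(α + 1))) := by
  have hbot : phiFn σ =O[atBot] (|·| ^ (-(α + 1))) := by
    have hσ' : (fun y => σ (y + 1)) =O[atBot] (|·| ^ (-(α + 1))) := by
      have h : (fun y => σ (y + 1)) =O[atBot] fun y => |y + 1| ^ (-(α + 1)) := by
        rw [neg_add']
        exact h3.2.comp_tendsto (tendsto_atBot_add_const_right _ 1 tendsto_id)
      exact h.trans ((rpow_neg_comp_add_const_isBigO (by linarith [h3.1]) 1).mono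
        atBot_le_cocompact)
    refine IsBigO.trans (IsBigO.of_bound 1 (Eventually.of_forall fun y => ?_)) hσ'
    have h₁ := hσ.nonneg hmono (y - 1)
    have h₂ := hmono (show y - 1 ≤ y + 1 by linarith)
    rw [Real.norm_eq_abs, Real.norm_eq_abs, one_mul, phiFn, abs_of_nonneg (by linarith),
      abs_of_nonneg (hσ.nonneg hmono _)]
    linarith
  have htop : phiFn σ =O[atTop] (|·| ^ (-(α + 1))) := by
    simpa [Function.comp_def, phiFn_neg h1] using hbot.comp_tendsto tendsto_neg_atTop_atBot
  rw [cocompact_eq_atBot_atTop, isBigO_sup]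
  exact ⟨hbot, htop⟩

theorem isBigO_iteratedDeriv_phiFn (h4 : Sigma4 σ m β K C) {r : ℕ} (hr1 : 1 ≤ r) (hrm : r ≤ m) :
    iteratedDeriv r (phiFn σ) =O[cocompact ℝ] (|·| ^ (-(β + 1))) := by
  obtain ⟨-, hβ, hσ, hbound⟩ := h4
  obtain ⟨-, -, hle⟩ := hbound r hr1 hrm
  have hdec : iteratedDeriv r σ =O[cocompact ℝ] (|·| ^ (-(β + 1))) :=
    isBigO_cocompact_rpow_neg_of_abs_le fun y hy => by rw [neg_add']; exact hle y hy
  have hq : 0 ≤ β + 1 := by linarith [(m.cast_nonneg : (0 : ℝ) ≤ m)]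
  rw [iteratedDeriv_phiFn (hσ.of_le (by exact_mod_cast hrm))]
  simpa [sub_eq_add_neg, div_eq_inv_mul] using
    ((hdec.comp_add_const_rpow_neg hq 1).sub
      (hdec.comp_add_const_rpow_neg hq (-1))).const_mul_left (2⁻¹ : ℝ)

theorem isBigO_iteratedDeriv_phiFn_of_le (hσ : Sigmoidal σ) (hmono : Monotone σ)
    (h1 : Sigma1 σ) (h3 : Sigma3 σ α) (h4 : Sigma4 σ m β K C) (hα : (m : ℝ) + 1 < α) {r : ℕ}
    (hrm : r ≤ m) : iteratedDeriv r (phiFn σ) =O[cocompact ℝ] (|·| ^ (-((m : ℝ) + 2))) := by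
  rcases Nat.eq_zero_or_pos r with rfl | hr
  · exact (isBigO_phiFn hσ hmono h1 h3).trans (rpow_neg_isBigO_rpow_neg (by linarith))
  · exact (isBigO_iteratedDeriv_phiFn h4 hr hrm).trans
      (rpow_neg_isBigO_rpow_neg (by linarith [h4.2.1]))

theorem algMoment_iteratedDeriv_phiFn (hσ : Sigmoidal σ) (hmono : Monotone σ) (h1 : Sigma1 σ)
    (h3 : Sigma3 σ α) (h4 : Sigma4 σ m β K C) (h5 : Sigma5 σ m A) (hα : (m : ℝ) + 1 < α)
    {r : ℕ} (hrm : r ≤ m) {j : ℕ} (hjm : j ≤ m) (x : ℝ) :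
    algMoment (iteratedDeriv r (phiFn σ)) j x =
      j.descFactorial r * Function.update A 0 1 (j - r) := by
  induction r generalizing j x with
  | zero =>
    rcases Nat.eq_zero_or_pos j with rfl | hj
    · simpa [algMoment] using (hasSum_phiFn hσ hmono x).tsum_eq
    · simpa [Function.update_of_ne hj.ne'] using h5 j hj hjm x
  | succ r ih =>
    have hφ : ContDiff ℝ m (phiFn σ) := contDiff_phiFn h4.2.2.1
    have hr : r < m := hrm
    have hj : (j : ℝ) + 1 < m + 2 := by linarith [(Nat.cast_le (α := ℝ)).2 hjm]
    have hderiv : ∀ y, HasDerivAt (iteratedDeriv r (phiFn σ))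
        (iteratedDeriv (r + 1) (phiFn σ) y) y := fun y => by
      rw [iteratedDeriv_succ]
      exact (hφ.differentiable_iteratedDeriv r (by exact_mod_cast hr) y).hasDerivAt
    rw [algMoment_eq_mul_algMoment_of_hasDerivAt hderiv
      (hφ.continuous_iteratedDeriv (r + 1) (by exact_mod_cast hrm))
      (isBigO_iteratedDeriv_phiFn_of_le hσ hmono h1 h3 h4 hα hr.le)
      (isBigO_iteratedDeriv_phiFn_of_le hσ hmono h1 h3 h4 hα hrm) hj (ih hr.le hjm) x,
      ih hr.le (by omega)]
    rcases j with _ | j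
    · simp
    · rw [Nat.succ_descFactorial_succ, Nat.add_sub_add_right, Nat.sub_zero]
      push_cast
      ring

end Sigmoidal

theorem simultaneous_approximation_general (σ : ℝ → ℝ) (α β : ℝ) (m : ℕ) (K C : ℕ → ℝ) (A : ℕ → ℝ)
    (hσ : Sigmoidal σ) (hmono : Monotone σ) (h1 : Sigma1 σ) (h3 : Sigma3 σ α)
    (h4 : Sigma4 σ m β K C) (h5 : Sigma5 σ m A)
    (hβ : 2 * (m : ℝ) < β) (hα : (m : ℝ) + 1 < α)
    (a b : ℤ) (hab : a < b) (δ : ℝ) (hδ : 0 < δ)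
    (f : ℝ → ℝ) (hf : ContDiffOn ℝ m f (Set.Icc (a : ℝ) (b : ℝ)))
    (s : ℕ) (hs1 : 1 ≤ s) (hsm : s ≤ m) :
    TendstoUniformlyOn
      (fun (n : ℕ) (x : ℝ) => iteratedDeriv s (fun y => Ftil σ f a b n y) x)
      (fun x : ℝ => iteratedDerivWithin s f (Set.Icc (a : ℝ) (b : ℝ)) x) atTop
      (Set.Icc ((a : ℝ) + δ) ((b : ℝ) - δ)) := by
  have hφ : ContDiff ℝ m (phiFn σ) := contDiff_phiFn h4.2.2.1
  have hΨ : Continuous (iteratedDeriv s (phiFn σ)) :=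
    hφ.continuous_iteratedDeriv s (by exact_mod_cast hsm)
  have hmom : ∀ j ≤ m, ∀ u, HasSum (fun k : ℤ => iteratedDeriv s (phiFn σ) (u - k) *
      ((k : ℝ) - u) ^ j) (j.descFactorial s * Function.update A 0 1 (j - s)) := fun j hj u => by
    rw [← algMoment_iteratedDeriv_phiFn hσ hmono h1 h3 h4 h5 hα hsm hj u]
    exact (summable_algMoment_terms hΨ (isBigO_iteratedDeriv_phiFn_of_le hσ hmono h1 h3 h4 hα hsm)
      (by linarith [(Nat.cast_le (α := ℝ)).2 hj]) u).hasSum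
  have hderiv : ∀ n : ℕ, (fun x => iteratedDeriv s (fun y => Ftil σ f a b n y) x) =
      fun x => (n : ℝ) ^ s * ∑ k ∈ Finset.Icc ((n : ℤ) * a) (n * b),
        f (k / n) * iteratedDeriv s (phiFn σ) (n * x - k) := fun n => funext fun x =>
    iteratedDeriv_sum_mul_comp_mul_sub (hφ.of_le (by exact_mod_cast hsm)) _ _ _ x
  simp only [hderiv]
  exact tendstoUniformlyOn_pow_mul_sum_kernel hΨ (isBigO_iteratedDeriv_phiFn h4 hs1 hsm)
    (by linarith) hsm hmom (fun j hj => by simp [Nat.descFactorial_eq_zero_iff_lt.2 hj])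
    (by simp [Nat.descFactorial_self]) hab hδ hf

theorem simultaneous_approximation (σ : ℝ → ℝ) (α β : ℝ) (m : ℕ) (K C : ℕ → ℝ) (A : ℕ → ℝ)
    (hσ : Sigmoidal σ) (hmono : Monotone σ) (h1 : Sigma1 σ) (h2 : Sigma2 σ) (h3 : Sigma3 σ α)
    (h4 : Sigma4 σ m β K C) (h5 : Sigma5 σ m A)
    (hβ : 2 * (m : ℝ) < β) (hα : (m : ℝ) + 1 < α)
    (a b : ℤ) (hab : a < b) (δ : ℝ) (hδ : 0 < δ) (hδ2 : (a : ℝ) + δ < (b : ℝ) - δ)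
    (f : ℝ → ℝ) (hf : ContDiffOn ℝ m f (Set.Icc (a : ℝ) (b : ℝ)))
    (s : ℕ) (hs1 : 1 ≤ s) (hsm : s ≤ m) :
    TendstoUniformlyOn
      (fun (n : ℕ) (x : ℝ) => iteratedDeriv s (fun y => Ftil σ f a b n y) x)
      (fun x : ℝ => iteratedDerivWithin s f (Set.Icc (a : ℝ) (b : ℝ)) x) atTop
      (Set.Icc ((a : ℝ) + δ) ((b : ℝ) - δ)) :=
  simultaneous_approximation_general σ α β m K C A hσ hmono h1 h3 h4 h5 hβ hα a b hab δ hδ f hf s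
    hs1 hsm
end
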